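/- arXiv:2106.03880 — 3 statements merged into one kernel-verified Lean document; each statement's English description precedes it below -/
import Mathlib

section
/- For every m ≥ 1 and every tuple of points x₁, …, x_m ∈ [0,2π)^d, the empirical Rademacher complexity of the class H_Ω^{B̃} of generalized trigonometric polynomials satisfies R̂_{(x₁,…,x_m)}(H_Ω^{B̃}) ≤ (1/√m) · ( 2π · max{K, B̃·√(|Ω₊|)} · √(2·log(2d)) + max{π, B̃} ). -/
open Real MeasureTheory
open scoped ENNReal NNReal BigOperators

noncomputable section

/-- The domain `[0, 2π)^d`. -/
def box (d : ℕ) : Set (Fin d → ℝ) := Set.univ.pi fun _ => Set.Ico 0 (2 * π)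

/-- Euclidean dot product `ω · x`. -/
def dot {d : ℕ} (ω x : Fin d → ℝ) : ℝ := ∑ j, ω j * x j

/-- The sign `±1` associated with a Boolean. -/
def signOf (b : Bool) : ℝ := if b then 1 else -1

/-- Empirical Rademacher complexity of a class `F` of real-valued functions with
respect to the sample points `x₁, …, x_m`:
`2^{-m} Σ_{σ ∈ {−1,1}^m} sup_{f ∈ F} (1/m) Σ_i σ_i f(x_i)`. -/
def empRad {X : Type*} {m : ℕ} (F : Set (X → ℝ)) (x : Fin m → X) : ℝ :=
  (1 / 2 ^ m) * ∑ σ : Fin m → Bool,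
    sSup ((fun f => (1 / (m : ℝ)) * ∑ i, signOf (σ i) * f (x i)) '' F)

/-- The Euclidean 2-norm of the coefficient vector `(a₀, (a_ω)_{ω∈Ω₊}, (b_ω)_{ω∈Ω₊})`. -/
def coeffNorm2 {d : ℕ} (Ωp : Finset (Fin d → ℝ)) (a0 : ℝ) (a b : (Fin d → ℝ) → ℝ) : ℝ :=
  Real.sqrt (a0 ^ 2 + ∑ ω ∈ Ωp, (a ω ^ 2 + b ω ^ 2))

/-- The generalized trigonometric polynomial with frequencies in `Ω₊` and
coefficients `a₀, (a_ω), (b_ω)`: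
`x ↦ a₀/2 + Σ_{ω∈Ω₊} (a_ω cos(ω·x) + b_ω sin(ω·x))`. -/
def gtp {d : ℕ} (Ωp : Finset (Fin d → ℝ)) (a0 : ℝ) (a b : (Fin d → ℝ) → ℝ) :
    (Fin d → ℝ) → ℝ :=
  fun x => a0 / 2 + ∑ ω ∈ Ωp, (a ω * Real.cos (dot ω x) + b ω * Real.sin (dot ω x))

/-- The class `H_Ω^{B̃}` of generalized trigonometric polynomials with frequencies in `Ω₊`
whose coefficient vector has Euclidean 2-norm at most `B̃`. -/
def Hclass {d : ℕ} (Ωp : Finset (Fin d → ℝ)) (Bt : ℝ) : Set ((Fin d → ℝ) → ℝ) :=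
  { f | ∃ a0 a b, coeffNorm2 Ωp a0 a b ≤ Bt ∧ f = gtp Ωp a0 a b }

/-- `K = Σ_{i=1}^d max_{ω∈Ω₊} |ω_i|`. -/
def Kconst {d : ℕ} (Ωp : Finset (Fin d → ℝ)) (hne : Ωp.Nonempty) : ℝ :=
  ∑ i, Ωp.sup' hne fun ω => |ω i|

end


-- ===== auxiliary lemmas added for the proof =====

noncomputable section AuxRad

lemma cs_sqrt {ι : Type*} (s : Finset ι) (f g : ι → ℝ) :
    ∑ i ∈ s, f i * g i ≤
      Real.sqrt (∑ i ∈ s, f i ^ 2) * Real.sqrt (∑ i ∈ s, g i ^ 2) := by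
  have h := Finset.sum_mul_sq_le_sq_mul_sq s f g
  have hr : (0:ℝ) ≤ Real.sqrt (∑ i ∈ s, f i ^ 2) * Real.sqrt (∑ i ∈ s, g i ^ 2) :=
    mul_nonneg (Real.sqrt_nonneg _) (Real.sqrt_nonneg _)
  rcases le_or_gt (∑ i ∈ s, f i * g i) 0 with hle | hpos
  · exact hle.trans hr
  · rw [← Real.sqrt_mul (by positivity)]
    exact (Real.le_sqrt hpos.le (by positivity)).mpr h

lemma cs2 (x1 x2 y1 y2 : ℝ) :
    x1 * y1 + x2 * y2 ≤ Real.sqrt (x1 ^ 2 + x2 ^ 2) * Real.sqrt (y1 ^ 2 + y2 ^ 2) := by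
  have h := cs_sqrt (Finset.univ : Finset Bool)
    (fun b => if b then x1 else x2) (fun b => if b then y1 else y2)
  simpa [Fintype.sum_bool] using h

lemma signOf_mul_self (b : Bool) : signOf b * signOf b = 1 := by cases b <;> simp [signOf]

lemma sum_signOf_mul {m : ℕ} (i j : Fin m) (hij : i ≠ j) :
    ∑ σ : Fin m → Bool, signOf (σ i) * signOf (σ j) = 0 := by
  classical
  refine Finset.sum_ninvolution (fun σ => Function.update σ i (!(σ i))) ?_ ?_ ?_ ?_
  · intro σ
    simp only [Function.update_self, Function.update_of_ne hij.symm]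
    have : signOf (!(σ i)) = - signOf (σ i) := by cases σ i <;> simp [signOf]
    rw [this]; ring
  · intro σ _ h
    have := congrFun h i
    simp only [Function.update_self] at this
    exact (σ i).not_ne_self this
  · intro σ; exact Finset.mem_univ _
  · intro σ
    funext k
    by_cases hk : k = i
    · subst hk; simp [Function.update_self]
    · simp [Function.update_of_ne hk]

lemma sum_sq_sign {m : ℕ} (u : Fin m → ℝ) :
    ∑ σ : Fin m → Bool, (∑ i, signOf (σ i) * u i) ^ 2 = 2 ^ m * ∑ i, u i ^ 2 := by
  classical
  have expand : ∀ σ : Fin m → Bool, (∑ i, signOf (σ i) * u i) ^ 2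
      = ∑ i, ∑ j, (signOf (σ i) * signOf (σ j)) * (u i * u j) := by
    intro σ
    rw [sq, Finset.sum_mul_sum]
    exact Finset.sum_congr rfl fun i _ => Finset.sum_congr rfl fun j _ => by ring
  simp_rw [expand]
  rw [Finset.sum_comm]
  have key : ∀ i : Fin m,
      (∑ σ : Fin m → Bool, ∑ j, (signOf (σ i) * signOf (σ j)) * (u i * u j))
        = 2 ^ m * u i ^ 2 := by
    intro i
    rw [Finset.sum_comm]
    have hj : ∀ j : Fin m,
        (∑ σ : Fin m → Bool, (signOf (σ i) * signOf (σ j)) * (u i * u j))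
          = if j = i then (2:ℝ) ^ m * u i ^ 2 else 0 := by
      intro j
      rw [← Finset.sum_mul]
      by_cases h : j = i
      · subst h
        rw [if_pos rfl]
        have : ∑ σ : Fin m → Bool, signOf (σ j) * signOf (σ j) = (2:ℝ) ^ m := by
          simp only [signOf_mul_self]
          simp [Finset.card_univ]
        rw [this]; ring
      · rw [sum_signOf_mul i j (Ne.symm h), zero_mul, if_neg h]
    simp_rw [hj]
    simp
  simp_rw [key]
  rw [← Finset.mul_sum]

/-- `(1/m) ∑ᵢ σᵢ φ(xᵢ)`. -/
def radTerm {d m : ℕ} (x : Fin m → Fin d → ℝ) (σ : Fin m → Bool)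
    (φ : (Fin d → ℝ) → ℝ) : ℝ :=
  (1 / (m : ℝ)) * ∑ i, signOf (σ i) * φ (x i)

/-- Norm of the "feature average" vector. -/
def Nval {d : ℕ} (Ωp : Finset (Fin d → ℝ)) {m : ℕ} (x : Fin m → Fin d → ℝ)
    (σ : Fin m → Bool) : ℝ :=
  Real.sqrt ((radTerm x σ (fun _ => 1 / 2)) ^ 2 +
    ∑ ω ∈ Ωp, ((radTerm x σ (fun y => Real.cos (dot ω y))) ^ 2 +
      (radTerm x σ (fun y => Real.sin (dot ω y))) ^ 2))

lemma Nval_nonneg {d : ℕ} (Ωp : Finset (Fin d → ℝ)) {m : ℕ} (x : Fin m → Fin d → ℝ)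
    (σ : Fin m → Bool) : 0 ≤ Nval Ωp x σ := Real.sqrt_nonneg _

lemma radTerm_gtp {d m : ℕ} (Ωp : Finset (Fin d → ℝ)) (a0 : ℝ) (a b : (Fin d → ℝ) → ℝ)
    (x : Fin m → Fin d → ℝ) (σ : Fin m → Bool) :
    (1 / (m : ℝ)) * ∑ i, signOf (σ i) * gtp Ωp a0 a b (x i)
      = a0 * radTerm x σ (fun _ => 1 / 2)
        + ∑ ω ∈ Ωp, (a ω * radTerm x σ (fun y => Real.cos (dot ω y))
            + b ω * radTerm x σ (fun y => Real.sin (dot ω y))) := by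
  have step1 : ∑ i, signOf (σ i) * gtp Ωp a0 a b (x i)
      = a0 * ∑ i, signOf (σ i) * (1 / 2)
        + ∑ ω ∈ Ωp, (a ω * ∑ i, signOf (σ i) * Real.cos (dot ω (x i))
            + b ω * ∑ i, signOf (σ i) * Real.sin (dot ω (x i))) := by
    calc ∑ i, signOf (σ i) * gtp Ωp a0 a b (x i)
        = ∑ i, (signOf (σ i) * (a0 / 2)
            + ∑ ω ∈ Ωp, (a ω * (signOf (σ i) * Real.cos (dot ω (x i)))
                + b ω * (signOf (σ i) * Real.sin (dot ω (x i))))) := by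
          refine Finset.sum_congr rfl fun i _ => ?_
          unfold gtp
          rw [mul_add, Finset.mul_sum]
          congr 1
          exact Finset.sum_congr rfl fun ω _ => by ring
      _ = (∑ i, signOf (σ i) * (a0 / 2))
            + ∑ i, ∑ ω ∈ Ωp, (a ω * (signOf (σ i) * Real.cos (dot ω (x i)))
                + b ω * (signOf (σ i) * Real.sin (dot ω (x i)))) :=
          Finset.sum_add_distrib
      _ = (∑ i, signOf (σ i) * (a0 / 2))
            + ∑ ω ∈ Ωp, ∑ i, (a ω * (signOf (σ i) * Real.cos (dot ω (x i)))
                + b ω * (signOf (σ i) * Real.sin (dot ω (x i)))) := by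
          rw [Finset.sum_comm]
      _ = a0 * ∑ i, signOf (σ i) * (1 / 2)
            + ∑ ω ∈ Ωp, (a ω * ∑ i, signOf (σ i) * Real.cos (dot ω (x i))
                + b ω * ∑ i, signOf (σ i) * Real.sin (dot ω (x i))) := by
          congr 1
          · rw [Finset.mul_sum]
            exact Finset.sum_congr rfl fun i _ => by ring
          · refine Finset.sum_congr rfl fun ω _ => ?_
            rw [Finset.sum_add_distrib, Finset.mul_sum, Finset.mul_sum]
  simp only [radTerm]
  rw [step1, mul_add]
  congr 1
  · ring
  · rw [Finset.mul_sum]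
    exact Finset.sum_congr rfl fun ω _ => by ring

lemma sum_radTerm_sq {d m : ℕ} (x : Fin m → Fin d → ℝ) (φ : (Fin d → ℝ) → ℝ) :
    ∑ σ : Fin m → Bool, (radTerm x σ φ) ^ 2
      = (1 / (m : ℝ)) ^ 2 * 2 ^ m * ∑ i, φ (x i) ^ 2 := by
  unfold radTerm
  simp only [mul_pow]
  rw [← Finset.mul_sum, sum_sq_sign (fun i => φ (x i))]
  ring

end AuxRad

set_option maxHeartbeats 1600000 in
/-- Empirical Rademacher complexity bound for the class `H_Ω^{B̃}` of
generalized trigonometric polynomials (Version 1):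
`R̂_{(x₁,…,x_m)}(H_Ω^{B̃}) ≤ (1/√m)(2π·max{K, B̃√|Ω₊|}·√(2 log(2d)) + max{π, B̃})`. -/
theorem rademacher_bound_gtp_v1
    (d : ℕ) (hd : 1 ≤ d) (Ωp : Finset (Fin d → ℝ)) (hne : Ωp.Nonempty)
    (hzero : ∀ ω ∈ Ωp, ω ≠ 0) (hasym : ∀ ω ∈ Ωp, -ω ∉ Ωp)
    (Bt : ℝ) (hBt : 0 < Bt)
    (m : ℕ) (hm : 1 ≤ m) (x : Fin m → Fin d → ℝ) (hx : ∀ i, x i ∈ box d) :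
    empRad (Hclass Ωp Bt) x ≤
      (1 / Real.sqrt m) *
        (2 * π * max (Kconst Ωp hne) (Bt * Real.sqrt Ωp.card) *
            Real.sqrt (2 * Real.log (2 * d)) +
          max π Bt) := by
  classical
  have hm0 : (0:ℝ) < m := by exact_mod_cast Nat.lt_of_lt_of_le Nat.zero_lt_one hm
  have hmne : (m:ℝ) ≠ 0 := ne_of_gt hm0
  set C : ℝ := (Ωp.card : ℝ) with hC
  have hC0 : 0 ≤ C := by positivity
  -- Step A: pointwise bound on the suprema
  have stepA : ∀ σ : Fin m → Bool,
      sSup ((fun f => (1 / (m : ℝ)) * ∑ i, signOf (σ i) * f (x i)) '' Hclass Ωp Bt)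
        ≤ Bt * Nval Ωp x σ := by
    intro σ
    apply Real.sSup_le
    · rintro y ⟨f, hf, rfl⟩
      obtain ⟨a0, a, b, hnorm, rfl⟩ := hf
      show (1 / (m : ℝ)) * ∑ i, signOf (σ i) * gtp Ωp a0 a b (x i) ≤ Bt * Nval Ωp x σ
      rw [radTerm_gtp]
      set V0 := radTerm x σ (fun _ => (1:ℝ) / 2) with hV0
      set VC := fun ω => radTerm x σ (fun y => Real.cos (dot ω y)) with hVC
      set VS := fun ω => radTerm x σ (fun y => Real.sin (dot ω y)) with hVS
      have hT : ∑ ω ∈ Ωp, (a ω * VC ω + b ω * VS ω)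
          ≤ Real.sqrt (∑ ω ∈ Ωp, (a ω ^ 2 + b ω ^ 2)) *
            Real.sqrt (∑ ω ∈ Ωp, (VC ω ^ 2 + VS ω ^ 2)) := by
        have h := cs_sqrt (Ωp ×ˢ (Finset.univ : Finset Bool))
          (fun p => if p.2 then a p.1 else b p.1)
          (fun p => if p.2 then VC p.1 else VS p.1)
        simp only [Finset.sum_product, Fintype.sum_bool, if_true, if_false] at h
        simpa using h
      have hA0 : (0:ℝ) ≤ ∑ ω ∈ Ωp, (a ω ^ 2 + b ω ^ 2) := by positivity
      have hV0' : (0:ℝ) ≤ V0 ^ 2 + ∑ ω ∈ Ωp, (VC ω ^ 2 + VS ω ^ 2) := by positivity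
      have hVz : (0:ℝ) ≤ ∑ ω ∈ Ωp, (VC ω ^ 2 + VS ω ^ 2) := by positivity
      have h2 := cs2 a0 (Real.sqrt (∑ ω ∈ Ωp, (a ω ^ 2 + b ω ^ 2))) V0
        (Real.sqrt (∑ ω ∈ Ωp, (VC ω ^ 2 + VS ω ^ 2)))
      rw [Real.sq_sqrt hA0, Real.sq_sqrt hVz] at h2
      have hchain : a0 * V0 + ∑ ω ∈ Ωp, (a ω * VC ω + b ω * VS ω)
          ≤ coeffNorm2 Ωp a0 a b * Nval Ωp x σ := by
        have : a0 * V0 + ∑ ω ∈ Ωp, (a ω * VC ω + b ω * VS ω)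
            ≤ a0 * V0 + Real.sqrt (∑ ω ∈ Ωp, (a ω ^ 2 + b ω ^ 2)) *
                Real.sqrt (∑ ω ∈ Ωp, (VC ω ^ 2 + VS ω ^ 2)) := by linarith
        refine this.trans ?_
        unfold coeffNorm2 Nval
        exact h2
      refine hchain.trans ?_
      exact mul_le_mul_of_nonneg_right hnorm (Nval_nonneg Ωp x σ)
    · exact mul_nonneg hBt.le (Nval_nonneg Ωp x σ)
  -- Step B: sum of squares of Nval
  have hNsq : ∑ σ : Fin m → Bool, (Nval Ωp x σ) ^ 2
      = 2 ^ m * ((1 / (m:ℝ)) * (1 / 4 + C)) := by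
    have hNv : ∀ σ : Fin m → Bool, (Nval Ωp x σ) ^ 2
        = (radTerm x σ (fun _ => (1:ℝ) / 2)) ^ 2 +
          ∑ ω ∈ Ωp, ((radTerm x σ (fun y => Real.cos (dot ω y))) ^ 2 +
            (radTerm x σ (fun y => Real.sin (dot ω y))) ^ 2) := by
      intro σ
      unfold Nval
      exact Real.sq_sqrt (by positivity)
    simp_rw [hNv]
    rw [Finset.sum_add_distrib, Finset.sum_comm]
    have e0 : ∑ σ : Fin m → Bool, (radTerm x σ (fun _ => (1:ℝ) / 2)) ^ 2
        = (1 / (m:ℝ)) ^ 2 * 2 ^ m * ((m:ℝ) * (1 / 4)) := by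
      rw [sum_radTerm_sq]
      congr 1
      simp [Finset.card_univ]
      norm_num
    have ec : ∀ ω : Fin d → ℝ,
        ∑ σ : Fin m → Bool, ((radTerm x σ (fun y => Real.cos (dot ω y))) ^ 2 +
          (radTerm x σ (fun y => Real.sin (dot ω y))) ^ 2)
        = (1 / (m:ℝ)) ^ 2 * 2 ^ m * (m:ℝ) := by
      intro ω
      rw [Finset.sum_add_distrib, sum_radTerm_sq, sum_radTerm_sq, ← mul_add]
      have : (∑ i, Real.cos (dot ω (x i)) ^ 2) + ∑ i, Real.sin (dot ω (x i)) ^ 2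
          = (m:ℝ) := by
        rw [← Finset.sum_add_distrib]
        have : ∀ i : Fin m, Real.cos (dot ω (x i)) ^ 2 + Real.sin (dot ω (x i)) ^ 2 = 1 := by
          intro i; rw [add_comm]; exact Real.sin_sq_add_cos_sq _
        simp [this, Finset.card_univ]
      rw [this]
    rw [e0]
    rw [Finset.sum_congr rfl fun ω _ => ec ω, Finset.sum_const, nsmul_eq_mul]
    field_simp
    ring
  -- Step C: average of Nval
  have hsum : (1 / (2:ℝ) ^ m) * ∑ σ : Fin m → Bool, Nval Ωp x σ
      ≤ (1 / Real.sqrt m) * Real.sqrt (1 / 4 + C) := by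
    have h1 : ∑ σ : Fin m → Bool, Nval Ωp x σ
        ≤ Real.sqrt (∑ σ : Fin m → Bool, (Nval Ωp x σ) ^ 2) * Real.sqrt (2 ^ m) := by
      have h := cs_sqrt (Finset.univ : Finset (Fin m → Bool)) (Nval Ωp x) (fun _ => 1)
      simpa [Finset.card_univ] using h
    rw [hNsq] at h1
    have h2pm : (0:ℝ) < 2 ^ m := by positivity
    have hss : Real.sqrt ((2:ℝ) ^ m) * Real.sqrt ((2:ℝ) ^ m) = (2:ℝ) ^ m :=
      Real.mul_self_sqrt (le_of_lt h2pm)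
    have heq : (1 / (2:ℝ) ^ m) * (Real.sqrt ((2:ℝ) ^ m * ((1 / (m:ℝ)) * (1 / 4 + C))) *
        Real.sqrt ((2:ℝ) ^ m)) = (1 / Real.sqrt m) * Real.sqrt (1 / 4 + C) := by
      rw [Real.sqrt_mul (le_of_lt h2pm),
        Real.sqrt_mul (by positivity : (0:ℝ) ≤ 1 / (m:ℝ)), one_div (m:ℝ), Real.sqrt_inv]
      calc (1 / (2:ℝ) ^ m) * (Real.sqrt ((2:ℝ) ^ m) *
              ((Real.sqrt (m:ℝ))⁻¹ * Real.sqrt (1 / 4 + C)) * Real.sqrt ((2:ℝ) ^ m))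
          = (Real.sqrt ((2:ℝ) ^ m) * Real.sqrt ((2:ℝ) ^ m)) / (2:ℝ) ^ m *
              ((Real.sqrt (m:ℝ))⁻¹ * Real.sqrt (1 / 4 + C)) := by ring
        _ = (Real.sqrt (m:ℝ))⁻¹ * Real.sqrt (1 / 4 + C) := by
            rw [hss, div_self (ne_of_gt h2pm), one_mul]
        _ = (1 / Real.sqrt m) * Real.sqrt (1 / 4 + C) := by ring
    calc (1 / (2:ℝ) ^ m) * ∑ σ : Fin m → Bool, Nval Ωp x σ
        ≤ (1 / (2:ℝ) ^ m) * (Real.sqrt ((2:ℝ) ^ m * ((1 / (m:ℝ)) * (1 / 4 + C))) *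
            Real.sqrt ((2:ℝ) ^ m)) := by
          apply mul_le_mul_of_nonneg_left h1 (by positivity)
      _ = (1 / Real.sqrt m) * Real.sqrt (1 / 4 + C) := heq
  -- Combine: empRad bound
  have hemp : empRad (Hclass Ωp Bt) x
      ≤ Bt * ((1 / Real.sqrt m) * Real.sqrt (1 / 4 + C)) := by
    unfold empRad
    calc (1 / (2:ℝ) ^ m) * ∑ σ : Fin m → Bool,
          sSup ((fun f => (1 / (m : ℝ)) * ∑ i, signOf (σ i) * f (x i)) '' Hclass Ωp Bt)
        ≤ (1 / (2:ℝ) ^ m) * ∑ σ : Fin m → Bool, Bt * Nval Ωp x σ := by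
          apply mul_le_mul_of_nonneg_left _ (by positivity)
          exact Finset.sum_le_sum fun σ _ => stepA σ
      _ = Bt * ((1 / (2:ℝ) ^ m) * ∑ σ : Fin m → Bool, Nval Ωp x σ) := by
          rw [← Finset.mul_sum]; ring
      _ ≤ Bt * ((1 / Real.sqrt m) * Real.sqrt (1 / 4 + C)) :=
          mul_le_mul_of_nonneg_left hsum hBt.le
  -- Step D: numeric comparison with the RHS
  have hsqrtC : Real.sqrt (1 / 4 + C) ≤ 1 / 2 + Real.sqrt C := by
    have hs : Real.sqrt C ^ 2 = C := Real.sq_sqrt hC0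
    have hsn : 0 ≤ Real.sqrt C := Real.sqrt_nonneg _
    have : (1:ℝ) / 4 + C ≤ (1 / 2 + Real.sqrt C) ^ 2 := by nlinarith
    calc Real.sqrt (1 / 4 + C) ≤ Real.sqrt ((1 / 2 + Real.sqrt C) ^ 2) :=
          Real.sqrt_le_sqrt this
      _ = 1 / 2 + Real.sqrt C := Real.sqrt_sq (by linarith)
  set M : ℝ := max (Kconst Ωp hne) (Bt * Real.sqrt C) with hM
  have hMB : Bt * Real.sqrt C ≤ M := le_max_right _ _
  have hM0 : 0 ≤ M := le_trans (by positivity) hMB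
  have hlog : (1:ℝ) ≤ 2 * Real.log (2 * d) := by
    have hd1 : (1:ℝ) ≤ (d:ℝ) := by exact_mod_cast hd
    have h2d : (2:ℝ) ≤ 2 * d := by linarith
    have hll : Real.log 2 ≤ Real.log (2 * d) := Real.log_le_log (by norm_num) h2d
    have := Real.log_two_gt_d9
    linarith
  have hfac : (1:ℝ) ≤ 2 * π * Real.sqrt (2 * Real.log (2 * d)) := by
    have hs1 : (1:ℝ) ≤ Real.sqrt (2 * Real.log (2 * d)) := by
      rw [show (1:ℝ) = Real.sqrt 1 by simp]
      exact Real.sqrt_le_sqrt hlog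
    have hpi : (1:ℝ) ≤ 2 * π := by nlinarith [Real.pi_gt_three]
    nlinarith
  have hnum : Bt * (1 / 2 + Real.sqrt C)
      ≤ 2 * π * M * Real.sqrt (2 * Real.log (2 * d)) + max π Bt := by
    have h1 : Bt * Real.sqrt C ≤ 2 * π * M * Real.sqrt (2 * Real.log (2 * d)) := by
      calc Bt * Real.sqrt C ≤ M := hMB
        _ = M * 1 := (mul_one M).symm
        _ ≤ M * (2 * π * Real.sqrt (2 * Real.log (2 * d))) :=
            mul_le_mul_of_nonneg_left hfac hM0
        _ = 2 * π * M * Real.sqrt (2 * Real.log (2 * d)) := by ring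
    have h2 : Bt * (1 / 2) ≤ max π Bt := le_trans (by linarith) (le_max_right π Bt)
    calc Bt * (1 / 2 + Real.sqrt C) = Bt * Real.sqrt C + Bt * (1 / 2) := by ring
      _ ≤ 2 * π * M * Real.sqrt (2 * Real.log (2 * d)) + max π Bt := add_le_add h1 h2
  calc empRad (Hclass Ωp Bt) x ≤ Bt * ((1 / Real.sqrt m) * Real.sqrt (1 / 4 + C)) := hemp
    _ ≤ (1 / Real.sqrt m) * (Bt * (1 / 2 + Real.sqrt C)) := by
        have hsm : 0 ≤ 1 / Real.sqrt (m:ℝ) := by positivity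
        have := mul_le_mul_of_nonneg_left hsqrtC hBt.le
        calc Bt * ((1 / Real.sqrt m) * Real.sqrt (1 / 4 + C))
            = (1 / Real.sqrt m) * (Bt * Real.sqrt (1 / 4 + C)) := by ring
          _ ≤ (1 / Real.sqrt m) * (Bt * (1 / 2 + Real.sqrt C)) :=
              mul_le_mul_of_nonneg_left this hsm
    _ ≤ (1 / Real.sqrt m) *
          (2 * π * M * Real.sqrt (2 * Real.log (2 * d)) + max π Bt) :=
        mul_le_mul_of_nonneg_left hnum (by positivity)
end

section
/- Let T ≥ 1 and N ≥ 1 be integers, let δ₁, …, δ_T be pairwise distinct positive real numbers, and let Δ = {0} ∪ {δ₁, −δ₁, …, δ_T, −δ_T} ⊆ ℝ. Then the N-fold sumset N·Δ = { x₁ + ⋯ + x_N : x_j ∈ Δ for all j } has cardinality at most binom(N + T − 1, T − 1) · (2N/T + 1)^T. -/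
open Real
open scoped BigOperators Classical

/-- The symmetric frequency set `Δ = {0} ∪ {±δ₁, …, ±δ_T}`. -/
noncomputable def symmFreqSet {T : ℕ} (δ : Fin T → ℝ) : Finset ℝ :=
  insert 0 (Finset.image δ Finset.univ ∪ Finset.image (fun j => -δ j) Finset.univ)

/-- The `N`-fold sumset of a finite set `Δ ⊆ ℝ`: all sums of `N` (not necessarily
distinct) elements of `Δ`. -/
noncomputable def nFoldSumset (N : ℕ) (Δ : Finset ℝ) : Finset ℝ :=
  Finset.image (fun x : Fin N → {r // r ∈ Δ} => ∑ j, (x j : ℝ)) Finset.univ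

lemma exists_int_rep {T : ℕ} (δ : Fin T → ℝ) :
    ∀ (n : ℕ) (x : Fin n → {r // r ∈ symmFreqSet δ}),
      ∃ c : Fin T → ℤ, (∑ j, (c j).natAbs) ≤ n ∧ (∑ i, (x i : ℝ)) = ∑ j, (c j : ℝ) * δ j := by
  intro n
  induction n with
  | zero => intro x; exact ⟨0, by simp, by simp⟩
  | succ n ih =>
    intro x
    obtain ⟨c, hc, heq⟩ := ih (fun i => x i.succ)
    have hx0 : (x 0 : ℝ) ∈ symmFreqSet δ := (x 0).2
    unfold symmFreqSet at hx0
    rw [Finset.mem_insert, Finset.mem_union] at hx0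
    have key : ∀ (e : ℤ) (j : Fin T), e.natAbs = 1 → ((x 0 : ℝ)) = (e : ℝ) * δ j →
        ∃ c : Fin T → ℤ, (∑ j, (c j).natAbs) ≤ n + 1 ∧
          (∑ i, (x i : ℝ)) = ∑ j, (c j : ℝ) * δ j := by
      intro e j he hxe
      refine ⟨(fun k => c k + (Pi.single j e : Fin T → ℤ) k), ?_, ?_⟩
      · show ∑ k, (c k + (Pi.single j e : Fin T → ℤ) k).natAbs ≤ n + 1
        have h1 : ∑ k, (c k + (Pi.single j e : Fin T → ℤ) k).natAbs ≤
            ∑ k, ((c k).natAbs + ((Pi.single j e : Fin T → ℤ) k).natAbs) :=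
          Finset.sum_le_sum fun k _ => Int.natAbs_add_le _ _
        rw [Finset.sum_add_distrib] at h1
        have h2 : ∑ k, ((Pi.single j e : Fin T → ℤ) k).natAbs = 1 := by
          simp [Pi.single_apply, apply_ite Int.natAbs, he]
        omega
      · show (∑ i, (x i : ℝ)) = ∑ k, ((c k + (Pi.single j e : Fin T → ℤ) k : ℤ) : ℝ) * δ k
        rw [Fin.sum_univ_succ, heq, hxe]
        have : ∀ k, ((c k + (Pi.single j e : Fin T → ℤ) k : ℤ) : ℝ) * δ k =
            (c k : ℝ) * δ k + (((Pi.single j e : Fin T → ℤ) k : ℤ) : ℝ) * δ k := by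
          intro k; push_cast [Pi.add_apply]; ring
        rw [Finset.sum_congr rfl fun k _ => this k, Finset.sum_add_distrib]
        have h3 : ∑ k, (((Pi.single j e : Fin T → ℤ) k : ℤ) : ℝ) * δ k = (e : ℝ) * δ j := by
          simp [Pi.single_apply, ite_mul]
        rw [h3]; ring
    rcases hx0 with h0 | h | h
    · refine ⟨c, le_trans hc (Nat.le_succ n), ?_⟩
      rw [Fin.sum_univ_succ, h0, zero_add, heq]
    · obtain ⟨j, -, hj⟩ := Finset.mem_image.mp h
      exact key 1 j rfl (by rw [← hj]; push_cast; ring)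
    · obtain ⟨j, -, hj⟩ := Finset.mem_image.mp h
      exact key (-1) j (by decide) (by rw [← hj]; push_cast; ring)

lemma amgm_aux (T N : ℕ) (hT : 1 ≤ T) (n : Fin T → ℕ) (hn : ∑ j, n j = N) :
    (∏ j, (2 * (n j : ℝ) + 1)) ≤ (2 * (N : ℝ) / (T : ℝ) + 1) ^ T := by
  have hT0 : (0:ℝ) < T := by exact_mod_cast hT
  set z : Fin T → ℝ := fun j => 2 * (n j : ℝ) + 1 with hz
  have hznn : ∀ j ∈ Finset.univ, (0:ℝ) ≤ z j := fun j _ => by positivity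
  have hw : ∑ _j : Fin T, (1 / (T:ℝ)) = 1 := by
    simp [Finset.sum_const, Finset.card_univ]
    field_simp
  have hgm := Real.geom_mean_le_arith_mean_weighted Finset.univ (fun _ => 1/(T:ℝ)) z
    (fun i _ => by positivity) hw hznn
  have hsum : ∑ j, (1/(T:ℝ)) * z j = 2 * (N:ℝ) / T + 1 := by
    rw [← Finset.mul_sum]
    have : ∑ j, z j = 2 * (N:ℝ) + T := by
      simp only [hz, Finset.sum_add_distrib, Finset.sum_const, Finset.card_univ,
        Fintype.card_fin, nsmul_eq_mul, mul_one, ← Finset.mul_sum]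
      rw [← Nat.cast_sum, hn]
    rw [this]; field_simp
  have key : ∏ j, z j = (∏ j, z j ^ (1/(T:ℝ))) ^ T := by
    rw [← Finset.prod_pow]
    refine Finset.prod_congr rfl fun j _ => ?_
    rw [← Real.rpow_natCast (z j ^ (1/(T:ℝ))) T, ← Real.rpow_mul (hznn j (Finset.mem_univ j)),
      one_div, inv_mul_cancel₀ (ne_of_gt hT0), Real.rpow_one]
  rw [key]
  refine pow_le_pow_left₀ (Finset.prod_nonneg fun j _ => Real.rpow_nonneg (hznn j (Finset.mem_univ j)) _) ?_ T
  exact hgm.trans_eq hsum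

lemma cardA_aux (T N : ℕ) (hT : 1 ≤ T) :
    (Finset.piAntidiag (Finset.univ : Finset (Fin T)) N).card = Nat.choose (N + T - 1) (T - 1) := by
  have h1 := Finset.map_sym_eq_piAntidiag (Finset.univ : Finset (Fin T)) N
  rw [← h1, Finset.card_map, Finset.sym_univ, Finset.card_univ, Sym.card_sym_eq_choose,
    Fintype.card_fin]
  have h2 : T + N - 1 = N + T - 1 := by omega
  rw [h2, ← Nat.choose_symm (by omega : N ≤ N + T - 1)]
  congr 1
  omega

/-- For pairwise distinct positive reals `δ₁, …, δ_T` and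
`Δ = {0} ∪ {±δ₁, …, ±δ_T}`, the `N`-fold sumset of `Δ` has cardinality at most
`binom(N + T − 1, T − 1)·(2N/T + 1)^T`. -/
theorem card_nfold_sumset_symmetric_freqs
    (T N : ℕ) (hT : 1 ≤ T) (hN : 1 ≤ N) (δ : Fin T → ℝ)
    (hpos : ∀ j, 0 < δ j) (hinj : Function.Injective δ) :
    ((nFoldSumset N (symmFreqSet δ)).card : ℝ) ≤
      (Nat.choose (N + T - 1) (T - 1) : ℝ) * (2 * (N : ℝ) / (T : ℝ) + 1) ^ T := by
  classical
  set Δs := nFoldSumset N (symmFreqSet δ) with hΔs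
  have hex : ∀ s ∈ Δs, ∃ c : Fin T → ℤ,
      (∑ j, (c j).natAbs) ≤ N ∧ s = ∑ j, (c j : ℝ) * δ j := by
    intro s hs
    rw [hΔs] at hs
    unfold nFoldSumset at hs
    rw [Finset.mem_image] at hs
    obtain ⟨x, -, rfl⟩ := hs
    exact exists_int_rep δ N x
  choose! cfun hc1 hc2 using hex
  set j0 : Fin T := ⟨0, hT⟩ with hj0
  set nfun : ℝ → (Fin T → ℕ) := fun s k =>
    (cfun s k).natAbs + (Pi.single j0 (N - ∑ j, (cfun s j).natAbs) : Fin T → ℕ) k with hnfun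
  set A := Finset.piAntidiag (Finset.univ : Finset (Fin T)) N with hA
  set B := A.sigma (fun n => Fintype.piFinset fun j => Finset.Icc (-(n j : ℤ)) ((n j : ℤ)))
    with hB
  have hsingle : ∀ (m : ℕ), ∑ k, (Pi.single j0 m : Fin T → ℕ) k = m := by
    intro m
    simp [Pi.single_apply]
  have hmaps : ∀ s ∈ Δs, (⟨nfun s, cfun s⟩ : Σ _ : Fin T → ℕ, Fin T → ℤ) ∈ B := by
    intro s hs
    rw [hB, Finset.mem_sigma]
    constructor
    · rw [hA, Finset.mem_piAntidiag]
      refine ⟨?_, fun i _ => Finset.mem_univ i⟩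
      rw [hnfun]
      rw [Finset.sum_add_distrib, hsingle]
      have := hc1 s hs
      omega
    · rw [Fintype.mem_piFinset]
      intro j
      rw [Finset.mem_Icc, ← abs_le, Int.abs_eq_natAbs]
      have : (cfun s j).natAbs ≤ nfun s j := by
        rw [hnfun]; exact Nat.le_add_right _ _
      exact_mod_cast this
  have hinjOn : Set.InjOn (fun s => (⟨nfun s, cfun s⟩ : Σ _ : Fin T → ℕ, Fin T → ℤ)) Δs := by
    intro s₁ h₁ s₂ h₂ h
    have hcc : cfun s₁ = cfun s₂ := by
      have := (Sigma.mk.inj_iff.mp h).2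
      exact eq_of_heq this
    rw [hc2 s₁ h₁, hc2 s₂ h₂, hcc]
  have hcard : Δs.card ≤ B.card := Finset.card_le_card_of_injOn _ hmaps hinjOn
  have hBcard : B.card = ∑ n ∈ A, ∏ j, (2 * n j + 1) := by
    rw [hB, Finset.card_sigma]
    refine Finset.sum_congr rfl fun n _ => ?_
    rw [Fintype.card_piFinset]
    refine Finset.prod_congr rfl fun j _ => ?_
    rw [Int.card_Icc]
    have : ((n j : ℤ) + 1 - -(n j : ℤ)) = ((2 * n j + 1 : ℕ) : ℤ) := by push_cast; ring
    rw [this, Int.toNat_natCast]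
  have hstep : ((Δs.card : ℕ) : ℝ) ≤ ∑ n ∈ A, ∏ j, (2 * (n j : ℝ) + 1) := by
    calc ((Δs.card : ℕ) : ℝ) ≤ (B.card : ℝ) := by exact_mod_cast hcard
    _ = ∑ n ∈ A, ∏ j, (2 * (n j : ℝ) + 1) := by
        rw [hBcard]; push_cast; rfl
  refine hstep.trans ?_
  have hbound : ∀ n ∈ A, (∏ j, (2 * (n j : ℝ) + 1)) ≤ (2 * (N : ℝ) / (T : ℝ) + 1) ^ T := by
    intro n hn
    rw [hA, Finset.mem_piAntidiag] at hn
    exact amgm_aux T N hT n hn.1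
  calc ∑ n ∈ A, ∏ j, (2 * (n j : ℝ) + 1)
      ≤ ∑ _n ∈ A, (2 * (N : ℝ) / (T : ℝ) + 1) ^ T := Finset.sum_le_sum hbound
    _ = (A.card : ℝ) * (2 * (N : ℝ) / (T : ℝ) + 1) ^ T := by
        rw [Finset.sum_const, nsmul_eq_mul]
    _ = (Nat.choose (N + T - 1) (T - 1) : ℝ) * (2 * (N : ℝ) / (T : ℝ) + 1) ^ T := by
        rw [hA, cardA_aux T N hT]
end

section
/- Let X be a set, F a class of real-valued functions on X, m ≥ 1, and S = ((x₁,y₁),…,(x_m,y_m)) ∈ (X × ℝ)^m. Let α ∈ (0,1], A > 0, and let ℓ : ℝ × ℝ → ℝ be such that z ↦ ℓ(y, z) is α-Hölder continuous with constant A for every y ∈ ℝ (i.e., |ℓ(y,z) − ℓ(y,z′)| ≤ A·|z − z′|^α for all y, z, z′). Define G = { (x,y) ↦ ℓ(y, f(x)) : f ∈ F }, the seminorm ‖g‖_{2,S} = ( (1/m) Σ_{i=1}^m g(x_i,y_i)² )^{1/2} on functions on X × ℝ, and the seminorm ‖f‖_{2α,S|x} = ( (1/m) Σ_{i=1}^m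 |f(x_i)|^{2α} )^{1/(2α)} on functions on X. Then for every β > 0, the covering numbers satisfy 𝒩(G, ‖·‖_{2,S}, β) ≤ 𝒩(F, ‖·‖_{2α,S|x}, (β/A)^{1/α}). -/
open Real
open scoped ENNReal NNReal BigOperators

noncomputable section

/-- The covering number `𝒩(K, dst, ε)`: the smallest cardinality of a subset `N ⊆ K`
such that every point of `K` is within distance `ε` of some point of `N`
(valued in `ℝ≥0∞`). -/
def coveringNumber {X : Type*} (dst : X → X → ℝ) (K : Set X) (ε : ℝ) : ℝ≥0∞ :=
  ⨅ (N : Set X) (_ : N ⊆ K) (_ : ∀ x ∈ K, ∃ y ∈ N, dst x y ≤ ε), ((N.encard : ℕ∞) : ℝ≥0∞)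

end

/-- If the loss `ℓ(y, ·)` is `α`-Hölder continuous with constant `A`
for every `y`, then the covering numbers of the loss class
`G = {(x,y) ↦ ℓ(y, f(x)) : f ∈ F}` with respect to the empirical `L²` seminorm on the
sample `S` satisfy `𝒩(G, ‖·‖_{2,S}, β) ≤ 𝒩(F, ‖·‖_{2α,S|x}, (β/A)^{1/α})`. -/
theorem covering_number_loss_class_le_of_holder
    {X : Type*} (F : Set (X → ℝ)) (m : ℕ) (hm : 1 ≤ m) (S : Fin m → X × ℝ)
    (α A : ℝ) (hα : α ∈ Set.Ioc (0 : ℝ) 1) (hA : 0 < A)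
    (ℓ : ℝ → ℝ → ℝ)
    (hHolder : ∀ y z z' : ℝ, |ℓ y z - ℓ y z'| ≤ A * |z - z'| ^ α)
    (β : ℝ) (hβ : 0 < β) :
    coveringNumber
        (fun g g' : X × ℝ → ℝ =>
          Real.sqrt ((1 / (m : ℝ)) * ∑ i, (g (S i) - g' (S i)) ^ 2))
        ((fun f : X → ℝ => fun p : X × ℝ => ℓ p.2 (f p.1)) '' F) β ≤
      coveringNumber
        (fun f f' : X → ℝ =>
          ((1 / (m : ℝ)) * ∑ i, |f (S i).1 - f' (S i).1| ^ (2 * α)) ^ (1 / (2 * α)))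
        F ((β / A) ^ (1 / α)) := by
  obtain ⟨hα0, hα1⟩ := hα
  set Φ : (X → ℝ) → (X × ℝ → ℝ) := fun f => fun p : X × ℝ => ℓ p.2 (f p.1) with hΦ
  rw [coveringNumber, coveringNumber]
  refine le_iInf fun N => le_iInf fun hN => le_iInf fun hcov => ?_
  have hcard : (((Φ '' N).encard : ℕ∞) : ℝ≥0∞) ≤ ((N.encard : ℕ∞) : ℝ≥0∞) := by
    exact_mod_cast Set.encard_image_le Φ N
  refine le_trans ?_ hcard
  refine iInf_le_of_le (Φ '' N) ?_
  refine iInf_le_of_le (Set.image_mono hN) ?_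
  refine iInf_le _ ?_
  · rintro g ⟨f, hf, rfl⟩
    obtain ⟨f', hf'N, hdist⟩ := hcov f hf
    refine ⟨Φ f', Set.mem_image_of_mem _ hf'N, ?_⟩
    -- main estimate
    have hm0 : (0:ℝ) < (m:ℝ)⁻¹ := by
      positivity
    have hsumnn : (0:ℝ) ≤ ∑ i, |f (S i).1 - f' (S i).1| ^ (2 * α) := by
      apply Finset.sum_nonneg
      intro i _
      positivity
    have hbase : (0:ℝ) ≤ (1 / (m : ℝ)) * ∑ i, |f (S i).1 - f' (S i).1| ^ (2 * α) := by
      positivity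
    have h2α : (0:ℝ) < 2 * α := by linarith
    -- D^(2α) ≤ ε^(2α)
    have hεnn : (0:ℝ) ≤ (β / A) ^ (1 / α) := by positivity
    have hpow : (1 / (m : ℝ)) * ∑ i, |f (S i).1 - f' (S i).1| ^ (2 * α)
        ≤ (β / A) ^ 2 := by
      have h1 : (((1 / (m : ℝ)) * ∑ i, |f (S i).1 - f' (S i).1| ^ (2 * α)) ^ (1 / (2 * α))) ^ (2 * α)
          ≤ (((β / A) ^ (1 / α)) ^ (2 * α)) :=
        Real.rpow_le_rpow (Real.rpow_nonneg hbase _) hdist (le_of_lt h2α)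
      rw [show (1:ℝ)/(2*α) = (2*α)⁻¹ from one_div _] at h1
      rw [Real.rpow_inv_rpow hbase (ne_of_gt h2α)] at h1
      have h2 : (((β / A) ^ (1 / α)) ^ (2 * α)) = (β / A) ^ (2:ℝ) := by
        rw [← Real.rpow_mul (by positivity)]
        congr 1
        field_simp
      rw [h2] at h1
      calc (1 / (m : ℝ)) * ∑ i, |f (S i).1 - f' (S i).1| ^ (2 * α) ≤ (β / A) ^ (2:ℝ) := h1
        _ = (β / A) ^ 2 := by
          rw [← Real.rpow_natCast (β / A) 2]; norm_num
    -- pointwise bound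
    have hpt : ∀ i : Fin m, (Φ f (S i) - Φ f' (S i)) ^ 2
        ≤ A ^ 2 * |f (S i).1 - f' (S i).1| ^ (2 * α) := by
      intro i
      have h1 : |Φ f (S i) - Φ f' (S i)| ≤ A * |f (S i).1 - f' (S i).1| ^ α :=
        hHolder (S i).2 (f (S i).1) (f' (S i).1)
      have h2 : (Φ f (S i) - Φ f' (S i)) ^ 2 ≤ (A * |f (S i).1 - f' (S i).1| ^ α) ^ 2 := by
        rw [← sq_abs]
        exact pow_le_pow_left₀ (abs_nonneg _) h1 2
      refine h2.trans_eq ?_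
      rw [mul_pow]
      congr 1
      rw [← Real.rpow_natCast (|f (S i).1 - f' (S i).1| ^ α) 2,
        ← Real.rpow_mul (abs_nonneg _)]
      norm_num
      ring_nf
    have hsum : (1 / (m : ℝ)) * ∑ i, (Φ f (S i) - Φ f' (S i)) ^ 2
        ≤ A ^ 2 * ((1 / (m : ℝ)) * ∑ i, |f (S i).1 - f' (S i).1| ^ (2 * α)) := by
      have h := Finset.sum_le_sum (fun i (_ : i ∈ Finset.univ) => hpt i)
      rw [← Finset.mul_sum] at h
      calc (1 / (m : ℝ)) * ∑ i, (Φ f (S i) - Φ f' (S i)) ^ 2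
          ≤ (1 / (m : ℝ)) * (A ^ 2 * ∑ i, |f (S i).1 - f' (S i).1| ^ (2 * α)) :=
            mul_le_mul_of_nonneg_left h (by positivity)
        _ = A ^ 2 * ((1 / (m : ℝ)) * ∑ i, |f (S i).1 - f' (S i).1| ^ (2 * α)) := by ring
    have hfinal : (1 / (m : ℝ)) * ∑ i, (Φ f (S i) - Φ f' (S i)) ^ 2 ≤ β ^ 2 := by
      calc (1 / (m : ℝ)) * ∑ i, (Φ f (S i) - Φ f' (S i)) ^ 2
          ≤ A ^ 2 * ((1 / (m : ℝ)) * ∑ i, |f (S i).1 - f' (S i).1| ^ (2 * α)) := hsum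
        _ ≤ A ^ 2 * (β / A) ^ 2 := by
            exact mul_le_mul_of_nonneg_left hpow (by positivity)
        _ = β ^ 2 := by
            field_simp
    calc Real.sqrt ((1 / (m : ℝ)) * ∑ i, (Φ f (S i) - Φ f' (S i)) ^ 2)
        ≤ Real.sqrt (β ^ 2) := Real.sqrt_le_sqrt hfinal
      _ = β := by rw [Real.sqrt_sq hβ.le]
end
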